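/- arXiv:2411.00271 — 2 statements merged into one kernel-verified Lean document; each statement's English description precedes it below -/
import Mathlib

section
/- Let H ⊆ F be finitely primary of rank s ≥ 2 and exponent α. For every positive integer k, the element x = p_i^{αk}·(p₁⋯p_s)^α lies in H and every factorization of x into atoms of H has length at most α; consequently some atom y in any such factorization satisfies v_{p_i}(y) ≥ k+1. -/
open scoped nonZeroDivisors

section MonoidDefs
variable {H B : Type*} [CommMonoid H] [CommMonoid B]

/-- The set of lengths of `a`: `{0}` for units, otherwise the set of `k` such that
`a` is a product of `k` atoms (irreducible elements). -/
def lengthsSet (a : H) : Set ℕ :=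
  {k | (IsUnit a ∧ k = 0) ∨
    (¬ IsUnit a ∧ ∃ l : Multiset H, Multiset.card l = k ∧ (∀ x ∈ l, Irreducible x) ∧ l.prod = a)}

/-- A transfer homomorphism: (T1) `B = θ(H)·B^×` and `θ⁻¹(B^×) = H^×`;
(T2) factorizations of `θ u` lift to factorizations of `u` up to associates. -/
def IsTransferHom (θ : H →* B) : Prop :=
  (∀ b : B, ∃ u : H, ∃ ε : Bˣ, b = θ u * ε) ∧
  (∀ u : H, IsUnit (θ u) → IsUnit u) ∧
  (∀ u : H, ∀ b c : B, θ u = b * c →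
    ∃ v w : H, u = v * w ∧ Associated (θ v) b ∧ Associated (θ w) c)

/-- A Krull monoid: a monoid admitting a divisor homomorphism into a
free abelian monoid. -/
def IsKrullMonoid (H : Type*) [CommMonoid H] : Prop :=
  ∃ (ι : Type) (d : H →* Multiplicative (ι →₀ ℕ)), ∀ a b : H, d a ∣ d b → a ∣ b

/-- Half-factorial: all factorizations of an element into atoms have the same length. -/
def IsHalfFactorial (A : Type*) [CommMonoid A] : Prop :=
  ∀ (a : A) (l m : Multiset A), (∀ x ∈ l, Irreducible x) → (∀ x ∈ m, Irreducible x) →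
    l.prod = a → m.prod = a → Multiset.card l = Multiset.card m

/-- An absolutely irreducible element: an atom all of whose powers factor uniquely
into atoms, up to associates. -/
def AbsolutelyIrreducible (a : H) : Prop :=
  Irreducible a ∧ ∀ n : ℕ, 0 < n → ∀ l m : Multiset H,
    (∀ x ∈ l, Irreducible x) → (∀ x ∈ m, Irreducible x) →
    l.prod = a ^ n → m.prod = a ^ n → Multiset.Rel Associated l m

end MonoidDefs

/-- A prime element of a monoid. -/
def IsPrimeElem {F : Type*} [CommMonoid F] (q : F) : Prop :=
  ¬ IsUnit q ∧ ∀ a b : F, q ∣ a * b → q ∣ a ∨ q ∣ b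


/-! Because the `p j` are pairwise non-associated primes, `v x j` is the largest `n` with
`p j ^ n ∣ x`; hence exponent vectors are unique and add up along factorizations. Every atom of
`H` is divisible by `∏ j, p j`, so it has valuation at least `1` at every prime. Fixing `j ≠ i`,
the `p j`-valuations of the atoms in a factorization of `x` sum to `α`, which bounds its length
by `α`; their `p i`-valuations sum to `α * k + α > α * k`, so one of them exceeds `k`. -/

namespace IsPrimeElem

variable {F : Type*} [CancelCommMonoid F] {q r a : F}

theorem not_dvd_of_isUnit (hq : IsPrimeElem q) (ha : IsUnit a) : ¬ q ∣ a :=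
  fun h => hq.1 (isUnit_of_dvd_unit h ha)

theorem dvd_of_dvd_pow (hq : IsPrimeElem q) {n : ℕ} (h : q ∣ a ^ n) : q ∣ a := by
  induction n with
  | zero => exact absurd (pow_zero a ▸ h) (hq.not_dvd_of_isUnit isUnit_one)
  | succ n ih => exact (hq.2 _ _ (pow_succ a n ▸ h)).elim ih id

theorem exists_mem_finset_dvd (hq : IsPrimeElem q) {ι : Type*} {t : Finset ι} {f : ι → F}
    (h : q ∣ ∏ j ∈ t, f j) : ∃ j ∈ t, q ∣ f j := by
  classical
  induction t using Finset.induction with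
  | empty => exact absurd h (hq.not_dvd_of_isUnit (by simp))
  | insert j t hj ih =>
    rw [Finset.prod_insert hj] at h
    rcases hq.2 _ _ h with h | h
    · exact ⟨j, Finset.mem_insert_self j t, h⟩
    · obtain ⟨m, hm, hdvd⟩ := ih h
      exact ⟨m, Finset.mem_insert_of_mem hm, hdvd⟩

theorem associated_of_dvd (hq : IsPrimeElem q) (hr : IsPrimeElem r) (h : q ∣ r) :
    Associated q r := by
  obtain ⟨c, rfl⟩ := h
  rcases hr.2 q c dvd_rfl with ⟨d, hd⟩ | ⟨d, hd⟩
  · have hcd : c * d = 1 :=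
      (mul_left_cancel (a := q) (by rw [mul_one, ← mul_assoc, ← hd])).symm
    exact ⟨(IsUnit.of_mul_eq_one d hcd).unit, rfl⟩
  · have hqd : q * d = 1 := (mul_left_cancel (a := c) (by
      rw [mul_one, ← mul_assoc, mul_comm c q]; exact hd)).symm
    exact absurd (IsUnit.of_mul_eq_one d hqd) hq.1

end IsPrimeElem

section Valuations

variable {F : Type*} [CancelCommMonoid F] {ι : Type*} [Fintype ι] {p : ι → F}

theorem le_of_pow_dvd_pow_mul {q u : F} (hu : ¬ q ∣ u) {n a : ℕ} (h : q ^ n ∣ q ^ a * u) :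
    n ≤ a := by
  by_contra! han
  obtain ⟨c, hc⟩ := (pow_dvd_pow q han).trans h
  rw [pow_succ, mul_assoc] at hc
  exact hu ⟨c, mul_left_cancel hc⟩

theorem not_dvd_unit_mul_prod_erase [DecidableEq ι] (hprime : ∀ j, IsPrimeElem (p j))
    (hnonassoc : ∀ i j, i ≠ j → ¬ Associated (p i) (p j))
    (ε : Fˣ) (a : ι → ℕ) (j : ι) :
    ¬ p j ∣ ε * ∏ m ∈ Finset.univ.erase j, p m ^ a m := by
  intro h
  rcases (hprime j).2 _ _ h with h | h
  · exact (hprime j).not_dvd_of_isUnit ε.isUnit h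
  · obtain ⟨m, hm, hdvd⟩ := (hprime j).exists_mem_finset_dvd h
    exact hnonassoc j m (Finset.ne_of_mem_erase hm).symm
      ((hprime j).associated_of_dvd (hprime m) ((hprime j).dvd_of_dvd_pow hdvd))

theorem pow_dvd_unit_mul_prod_pow_iff (hprime : ∀ j, IsPrimeElem (p j))
    (hnonassoc : ∀ i j, i ≠ j → ¬ Associated (p i) (p j))
    (ε : Fˣ) (a : ι → ℕ) (j : ι) (n : ℕ) :
    p j ^ n ∣ ε * ∏ m, p m ^ a m ↔ n ≤ a j := by
  classical
  rw [← Finset.mul_prod_erase _ _ (Finset.mem_univ j), mul_left_comm]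
  exact ⟨le_of_pow_dvd_pow_mul (not_dvd_unit_mul_prod_erase hprime hnonassoc ε a j),
    fun h => (pow_dvd_pow _ h).mul_right _⟩

theorem exponents_eq_of_unit_mul_prod_pow_eq (hprime : ∀ j, IsPrimeElem (p j))
    (hnonassoc : ∀ i j, i ≠ j → ¬ Associated (p i) (p j)) {ε δ : Fˣ} {a b : ι → ℕ}
    (h : (ε : F) * ∏ m, p m ^ a m = δ * ∏ m, p m ^ b m) : a = b := by
  funext j
  have key := fun n => (pow_dvd_unit_mul_prod_pow_iff hprime hnonassoc ε a j n).symm.trans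
    (h ▸ pow_dvd_unit_mul_prod_pow_iff hprime hnonassoc δ b j n)
  exact le_antisymm ((key _).1 le_rfl) ((key _).2 le_rfl)

theorem one_le_of_prod_dvd (hprime : ∀ j, IsPrimeElem (p j))
    (hnonassoc : ∀ i j, i ≠ j → ¬ Associated (p i) (p j)) {v : F → ι → ℕ}
    (hrep : ∀ x : F, ∃ ε : Fˣ, x = (ε : F) * ∏ i, p i ^ v x i) {x : F}
    (hx : (∏ i, p i) ∣ x) (j : ι) : 1 ≤ v x j := by
  obtain ⟨ε, hε⟩ := hrep x
  rw [← pow_dvd_unit_mul_prod_pow_iff hprime hnonassoc ε, ← hε, pow_one]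
  exact (Finset.dvd_prod_of_mem p (Finset.mem_univ j)).trans hx

theorem exists_multiset_prod_map_eq_unit_mul_prod_pow {v : F → ι → ℕ}
    (hrep : ∀ x : F, ∃ ε : Fˣ, x = (ε : F) * ∏ i, p i ^ v x i) {κ : Type*} (f : κ → F)
    (l : Multiset κ) :
    ∃ ε : Fˣ, (l.map f).prod = ε * ∏ j, p j ^ (l.map fun y => v (f y) j).sum := by
  induction l using Multiset.induction with
  | empty => exact ⟨1, by simp⟩
  | cons y t ih =>
    obtain ⟨ε, hε⟩ := ih
    obtain ⟨δ, hδ⟩ := hrep (f y)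
    refine ⟨δ * ε, ?_⟩
    rw [Multiset.map_cons, Multiset.prod_cons, hε, hδ]
    simp only [Multiset.map_cons, Multiset.sum_cons, pow_add, Finset.prod_mul_distrib,
      Units.val_mul, mul_mul_mul_comm]

theorem prod_pow_single_add [DecidableEq ι] (i : ι) (a b : ℕ) :
    ∏ j, p j ^ ((Pi.single i a : ι → ℕ) j + b) = p i ^ a * (∏ j, p j) ^ b := by
  simp only [pow_add, Finset.prod_mul_distrib, Finset.prod_pow]
  rw [Fintype.prod_eq_single i fun j hj => by rw [Pi.single_eq_of_ne hj, pow_zero],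
    Pi.single_eq_same]

end Valuations

theorem Multiset.exists_lt_of_card_mul_lt_sum_map {κ : Type*} {l : Multiset κ} {f : κ → ℕ}
    {k : ℕ} (h : card l * k < (l.map f).sum) : ∃ y ∈ l, k < f y := by
  by_contra! hle
  have := Multiset.sum_map_le_sum_map f (fun _ => k) hle
  simp only [Multiset.map_const', Multiset.sum_replicate, smul_eq_mul] at this
  omega

theorem finitely_primary_special_element_general {F : Type*} [CancelCommMonoid F]
    {s : ℕ} (hs : 2 ≤ s)
    (p : Fin s → F) (hprime : ∀ i, IsPrimeElem (p i))
    (hnonassoc : ∀ i j, i ≠ j → ¬ Associated (p i) (p j))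
    (v : F → Fin s → ℕ)
    (hrep : ∀ x : F, ∃ ε : Fˣ, x = (ε : F) * ∏ i, p i ^ v x i)
    (H : Submonoid F) {α : ℕ} (hα : 0 < α)
    (hH1 : ∀ x : ↥H, ¬ IsUnit x → (∏ i, p i) ∣ (x : F))
    (hH2 : ∀ y : F, (∏ i, p i) ^ α * y ∈ H)
    (k : ℕ) (i : Fin s) :
    p i ^ (α * k) * (∏ j, p j) ^ α ∈ H ∧
    ∀ l : Multiset ↥H, (∀ y ∈ l, Irreducible y) →
      (l.prod : F) = p i ^ (α * k) * (∏ j, p j) ^ α →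
      Multiset.card l ≤ α ∧ ∃ y ∈ l, k + 1 ≤ v (y : F) i := by
  refine ⟨by simpa only [mul_comm] using hH2 (p i ^ (α * k)), fun l hl hprod => ?_⟩
  obtain ⟨ε, hε⟩ := exists_multiset_prod_map_eq_unit_mul_prod_pow hrep Subtype.val l
  have hexp : (fun j => (l.map fun y : H => v y j).sum) = Pi.single i (α * k) + fun _ => α := by
    refine exponents_eq_of_unit_mul_prod_pow_eq hprime hnonassoc (ε := ε) (δ := 1) ?_
    rw [← hε, ← Submonoid.coe_multiset_prod, hprod, Units.val_one, one_mul]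
    exact (prod_pow_single_add i _ _).symm
  have hatom (y : H) (hy : y ∈ l) (j : Fin s) : 1 ≤ v y j :=
    one_le_of_prod_dvd hprime hnonassoc hrep (hH1 y (hl y hy).not_isUnit) j
  have : Nontrivial (Fin s) := Fin.nontrivial_iff_two_le.2 hs
  obtain ⟨j, hj⟩ := exists_ne i
  have hcard : Multiset.card l ≤ α := by
    calc Multiset.card l = (l.map fun _ : H => 1).sum := by simp
      _ ≤ (l.map fun y : H => v y j).sum := Multiset.sum_map_le_sum_map _ _ (hatom · · j)
      _ = α := by simpa [hj] using congrFun hexp j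
  refine ⟨hcard, Multiset.exists_lt_of_card_mul_lt_sum_map ?_⟩
  calc Multiset.card l * k ≤ α * k := Nat.mul_le_mul_right k hcard
    _ < α * k + α := Nat.lt_add_of_pos_right hα
    _ = (l.map fun y : H => v y i).sum := by simpa using (congrFun hexp i).symm

theorem finitely_primary_special_element {F : Type*} [CancelCommMonoid F]
    {s : ℕ} (hs : 2 ≤ s)
    (p : Fin s → F) (hprime : ∀ i, IsPrimeElem (p i))
    (hnonassoc : ∀ i j, i ≠ j → ¬ Associated (p i) (p j))
    (v : F → Fin s → ℕ)
    (hrep : ∀ x : F, ∃ ε : Fˣ, x = (ε : F) * ∏ i, p i ^ v x i)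
    (H : Submonoid F) {α : ℕ} (hα : 0 < α)
    (hH1 : ∀ x : ↥H, ¬ IsUnit x → (∏ i, p i) ∣ (x : F))
    (hH2 : ∀ y : F, (∏ i, p i) ^ α * y ∈ H)
    (k : ℕ) (hk : 0 < k) (i : Fin s) :
    p i ^ (α * k) * (∏ j, p j) ^ α ∈ H ∧
    ∀ l : Multiset ↥H, (∀ y ∈ l, Irreducible y) →
      (l.prod : F) = p i ^ (α * k) * (∏ j, p j) ^ α →
      Multiset.card l ≤ α ∧ ∃ y ∈ l, k + 1 ≤ v (y : F) i :=
  finitely_primary_special_element_general hs p hprime hnonassoc v hrep H hα hH1 hH2 k i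
end

section
/- Under the standing assumptions with |Cl(R)| ≠ 2 and O transfer Krull: if P₁, P₂, P₃ are prime ideals of R coprime to f with ord([P₁]) = ord([P₂]) = 2, [P₁] ≠ [P₂], and [P₃] = [P₁] + [P₂], then the principal ideal P₁P₂P₃ is generated by an element of O up to R-units. -/
open scoped nonZeroDivisors

section RingDefs
variable {R : Type*} [CommRing R]

/-- The conductor of a subring `O ⊆ R`: the largest ideal of `R` contained in `O`. -/
def Subring.conductor (O : Subring R) : Ideal R where
  carrier := {x | ∀ r : R, x * r ∈ O}
  add_mem' := by
    intro a b ha hb r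
    have h : (a + b) * r = a * r + b * r := by ring
    rw [h]; exact O.add_mem (ha r) (hb r)
  zero_mem' := by intro r; simpa using O.zero_mem
  smul_mem' := by
    intro c x hx r
    have h : c • x * r = x * (c * r) := by simp [smul_eq_mul]; ring
    rw [h]; exact hx (c * r)

/-- `a` is a regular element modulo the ideal `f`. -/
def RegF (f : Ideal R) (a : R) : Prop := IsUnit (Ideal.Quotient.mk f a)

end RingDefs

section TK
variable {K : Type*} [CommRing K]

/-- `x` and `y` are associated within the submonoid `H` of `K`. -/
def AssocIn (H : Submonoid K) (x y : K) : Prop :=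
  ∃ ε ∈ H, (∃ ε' ∈ H, ε * ε' = 1) ∧ x = y * ε

end TK

variable {R₀ : Type*}

/-- `H` is a Krull overmonoid of `O^∙` inside the quotient field of `O` (which is the
quotient field of `R`), with `O^∙ ⊆ H ⊆ q(O^∙)`, such that the inclusion `O^∙ ↪ H`
is a transfer homomorphism; this witnesses that `O` is transfer Krull. -/
structure IsTKOvermonoid {R : Type*} [CommRing R] [IsDomain R] [IsDedekindDomain R]
    (O : Subring R) (H : Submonoid (FractionRing R)) : Prop where
  nonzero : ∀ x ∈ H, x ≠ 0
  incl : ∀ a : R, a ∈ O → a ≠ 0 → algebraMap R (FractionRing R) a ∈ H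
  inQuot : ∀ x ∈ H, ∃ a b : R, a ∈ O ∧ b ∈ O ∧ a ≠ 0 ∧ b ≠ 0 ∧
    x * algebraMap R (FractionRing R) b = algebraMap R (FractionRing R) a
  krull : IsKrullMonoid ↥H
  t1 : ∀ x ∈ H, ∃ a : R, a ∈ O ∧ a ≠ 0 ∧ ∃ ε ∈ H, (∃ ε' ∈ H, ε * ε' = 1) ∧
    x = algebraMap R (FractionRing R) a * ε
  t1' : ∀ a : R, a ∈ O → a ≠ 0 →
    (∃ y ∈ H, algebraMap R (FractionRing R) a * y = 1) → ∃ b ∈ O, a * b = 1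
  t2 : ∀ a : R, a ∈ O → a ≠ 0 → ∀ x ∈ H, ∀ y ∈ H,
    algebraMap R (FractionRing R) a = x * y →
    ∃ v w : R, v ∈ O ∧ w ∈ O ∧ a = v * w ∧
      AssocIn H (algebraMap R (FractionRing R) v) x ∧
      AssocIn H (algebraMap R (FractionRing R) w) y

/-!
Since `[P₁]` and `[P₂]` are distinct of order two and `[P₃] = [P₁][P₂]`, the product
`P₁^i P₂^j P₃^k` is principal exactly when `i + k` and `j + k` are even. So every `Pᵢ²` is
principal, and because `H` is root-closed and `O^∙ ↪ H` is a transfer homomorphism, it has a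
generator `aᵢ ∈ O`; as `Pᵢ` is not principal, `aᵢ` is an atom of `R` and its image an atom of `H`.
Write `P₁P₂P₃ = tR`, so that `t²u = a₁a₂a₃` with `u ∈ R^×`. Lifting the factorization
`a₁a₂a₃ = (tu)·t` in `H` to `O` gives `a₁a₂a₃ = vw` with `v, w ∈ O`, `v ≃ tu` and `w ≃ t` in `H`.
By parity, `vR` is either `P₁P₂P₃`, and `v` is the required generator, or one of `vR`, `wR` is
`R` or some `Pᵢ²`. Neither can happen: `t` is not an `H`-unit, and `t ≃ a₁` in `H` would give
`a₁ ≃ a₂a₃` after squaring, a factorization of the atom `a₁` into two non-units.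
-/

theorem IsKrullMonoid.dvd_of_pow_dvd_pow {M : Type*} [CommMonoid M] (hM : IsKrullMonoid M)
    {a b : M} {n : ℕ} (hn : n ≠ 0) (h : b ^ n ∣ a ^ n) : b ∣ a := by
  obtain ⟨ι, d, hd⟩ := hM
  refine hd b a ⟨Multiplicative.ofAdd ((d a).toAdd - (d b).toAdd), ?_⟩
  obtain ⟨c, hc⟩ := map_dvd d h
  have hle : (d b).toAdd ≤ (d a).toAdd := fun i => by
    have hi := congrArg (fun x : Multiplicative (ι →₀ ℕ) => x.toAdd i) hc
    simp only [map_pow, toAdd_pow, toAdd_mul, Finsupp.add_apply, Finsupp.smul_apply,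
      smul_eq_mul] at hi
    exact Nat.le_of_mul_le_mul_left (hi ▸ Nat.le_add_right _ _) (Nat.pos_of_ne_zero hn)
  exact Multiplicative.toAdd.injective (add_tsub_cancel_of_le hle).symm

theorem pow_mul_pow_eq_one_iff_even {G : Type*} [CommGroup G] {g₁ g₂ : G}
    (h₁ : orderOf g₁ = 2) (h₂ : orderOf g₂ = 2) (hne : g₁ ≠ g₂) (a b : ℕ) :
    g₁ ^ a * g₂ ^ b = 1 ↔ Even a ∧ Even b := by
  have hpow : ∀ {g : G}, orderOf g = 2 → ∀ n : ℕ, g ^ n = if Even n then 1 else g := by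
    intro g hg n
    rw [← pow_mod_orderOf, hg]
    split_ifs with hn
    · rw [Nat.even_iff.mp hn, pow_zero]
    · rw [Nat.odd_iff.mp (Nat.not_even_iff_odd.mp hn), pow_one]
  have hg₁ : g₁ ≠ 1 := fun h => by simp [h] at h₁
  have hg₂ : g₂ ≠ 1 := fun h => by simp [h] at h₂
  have hinv : g₁ * g₂ ≠ 1 := fun h =>
    hne (by rw [mul_eq_one_iff_eq_inv.mp h, inv_eq_of_mul_eq_one_right
      (by rw [← pow_two, ← h₂, pow_orderOf_eq_one])])
  rw [hpow h₁, hpow h₂]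
  split_ifs <;> simp_all

section PrimePowers

variable {M : Type*} [CommMonoidWithZero M] [IsCancelMulZero M] [Subsingleton Mˣ]

theorem exists_eq_pow_of_mul_eq_prime_pow {p x y : M} (hp : Prime p) {a : ℕ}
    (h : x * y = p ^ a) :
    ∃ i ≤ a, x = p ^ i ∧ y = p ^ (a - i) := by
  obtain ⟨i, j, b, c, hij, hbc, rfl, rfl⟩ := mul_eq_mul_prime_pow hp (h.trans (one_mul _).symm)
  obtain rfl : b = 1 := isUnit_iff_eq_one.mp (.of_mul_eq_one c hbc.symm)
  obtain rfl : c = 1 := by simpa using hbc.symm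
  exact ⟨i, by omega, one_mul _, by rw [one_mul, ← hij, Nat.add_sub_cancel_left]⟩

theorem exists_eq_pow_mul_pow_mul_pow_of_mul_eq {p q r x y : M} (hp : Prime p) (hq : Prime q)
    (hr : Prime r) {a b c : ℕ} (h : x * y = p ^ a * q ^ b * r ^ c) :
    ∃ i ≤ a, ∃ j ≤ b, ∃ k ≤ c, x = p ^ i * q ^ j * r ^ k ∧
      y = p ^ (a - i) * q ^ (b - j) * r ^ (c - k) := by
  obtain ⟨k, k', x₁, y₁, hk, hxy₁, rfl, rfl⟩ := mul_eq_mul_prime_pow hr h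
  obtain ⟨j, j', x₂, y₂, hj, hxy₂, rfl, rfl⟩ := mul_eq_mul_prime_pow hq hxy₁.symm
  obtain ⟨i, hi, rfl, rfl⟩ := exists_eq_pow_of_mul_eq_prime_pow hp hxy₂.symm
  obtain rfl : k' = c - k := by omega
  obtain rfl : j' = b - j := by omega
  exact ⟨i, hi, j, by omega, k, by omega, rfl, rfl⟩

end PrimePowers

section Ideal

variable {R : Type*} [CommRing R]

theorem RegF.mul {f : Ideal R} {x y : R} (hx : RegF f x) (hy : RegF f y) :
    RegF f (x * y) := by
  rw [RegF, map_mul]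
  exact IsUnit.mul hx hy

theorem RegF.of_dvd {f : Ideal R} {x y : R} (hx : RegF f x) (h : y ∣ x) : RegF f y := by
  obtain ⟨z, rfl⟩ := h
  exact isUnit_of_mul_isUnit_left (by rwa [RegF, map_mul] at hx)

theorem regF_of_isCoprime {f : Ideal R} {x : R} (h : IsCoprime (Ideal.span {x}) f) :
    RegF f x := by
  obtain ⟨i, hi, j, hj, hij⟩ := h.exists
  obtain ⟨r, rfl⟩ := Ideal.mem_span_singleton'.mp hi
  refine .of_mul_eq_one (Ideal.Quotient.mk f r) ?_
  rw [← map_mul, ← map_one (Ideal.Quotient.mk f), Ideal.Quotient.eq, ← hij]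
  simpa [mul_comm] using f.neg_mem hj

theorem Subring.exists_pow_mem_of_regF {O : Subring R}
    (hfin : Finite (R ⧸ O.conductor)) {x : R} (hx : RegF O.conductor x) :
    ∃ n ≠ 0, x ^ n ∈ O := by
  obtain ⟨u, hu⟩ := hx
  refine ⟨orderOf u, (isOfFinOrder_of_finite u).orderOf_pos.ne', ?_⟩
  have hf : x ^ orderOf u - 1 ∈ O.conductor := by
    rw [← Ideal.Quotient.eq, map_pow, ← hu, ← Units.val_pow_eq_pow_val, pow_orderOf_eq_one,
      Units.val_one, map_one]
  simpa using O.add_mem (hf 1) O.one_mem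

theorem Ideal.IsPrime.isCoprime_of_not_le [Ring.DimensionLEOne R] {P I : Ideal R}
    (hP : P.IsPrime) (hP0 : P ≠ ⊥) (h : ¬ I ≤ P) : IsCoprime P I := by
  refine Ideal.isCoprime_iff_sup_eq.mpr (by_contra fun hPI => h ?_)
  exact le_sup_right.trans ((hP.isMaximal hP0).eq_of_le hPI le_sup_left).ge

theorem irreducible_of_span_eq_sq [IsDedekindDomain R] {P : Ideal R} (hP : P.IsPrime)
    (hP0 : P ≠ ⊥) (hnp : ¬ P.IsPrincipal) {a : R} (ha : Ideal.span {a} = P ^ 2) :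
    Irreducible a := by
  refine ⟨fun hu => hP.ne_top (top_le_iff.mp ?_), fun x y hxy => ?_⟩
  · rw [← Ideal.span_singleton_eq_top.mpr hu, ha]
    exact Ideal.pow_le_self two_ne_zero
  obtain ⟨i, hi, hx, hy⟩ := exists_eq_pow_of_mul_eq_prime_pow (Ideal.prime_of_isPrime hP0 hP)
    (show Ideal.span {x} * Ideal.span {y} = P ^ 2 by
      rw [Ideal.span_singleton_mul_span_singleton, ← hxy, ha])
  interval_cases i
  · exact .inl (Ideal.span_singleton_eq_top.mp (by rw [hx, pow_zero, Ideal.one_eq_top]))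
  · exact absurd ⟨⟨x, by rw [← pow_one P, ← hx]⟩⟩ hnp
  · exact .inr (Ideal.span_singleton_eq_top.mp (by rw [hy, pow_zero, Ideal.one_eq_top]))

theorem isPrincipal_pow_mul_pow_mul_pow_iff [IsDedekindDomain R] {P₁ P₂ P₃ : Ideal R}
    (h₁ : P₁ ∈ (Ideal R)⁰) (h₂ : P₂ ∈ (Ideal R)⁰) (h₃ : P₃ ∈ (Ideal R)⁰)
    (ho₁ : orderOf (ClassGroup.mk0 ⟨P₁, h₁⟩) = 2) (ho₂ : orderOf (ClassGroup.mk0 ⟨P₂, h₂⟩) = 2)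
    (hneq : ClassGroup.mk0 ⟨P₁, h₁⟩ ≠ ClassGroup.mk0 ⟨P₂, h₂⟩)
    (hcl : ClassGroup.mk0 ⟨P₃, h₃⟩ = ClassGroup.mk0 ⟨P₁, h₁⟩ * ClassGroup.mk0 ⟨P₂, h₂⟩)
    (i j k : ℕ) :
    (P₁ ^ i * P₂ ^ j * P₃ ^ k).IsPrincipal ↔ Even (i + k) ∧ Even (j + k) := by
  have hmem : P₁ ^ i * P₂ ^ j * P₃ ^ k ∈ (Ideal R)⁰ :=
    mul_mem (mul_mem (pow_mem h₁ i) (pow_mem h₂ j)) (pow_mem h₃ k)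
  rw [← ClassGroup.mk0_eq_one_iff hmem, ← pow_mul_pow_eq_one_iff_even ho₁ ho₂ hneq]
  change ClassGroup.mk0 (⟨P₁, h₁⟩ ^ i * ⟨P₂, h₂⟩ ^ j * ⟨P₃, h₃⟩ ^ k) = 1 ↔ _
  rw [map_mul, map_mul, map_pow, map_pow, map_pow, hcl, mul_pow, pow_add, pow_add,
    mul_mul_mul_comm, mul_assoc]

theorem span_eq_mul_or_mem_of_mul_eq [IsDedekindDomain R] {P₁ P₂ P₃ : Ideal R}
    (hp₁ : Prime P₁) (hp₂ : Prime P₂) (hp₃ : Prime P₃)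
    (hprin : ∀ i j k : ℕ, (P₁ ^ i * P₂ ^ j * P₃ ^ k).IsPrincipal ↔ Even (i + k) ∧ Even (j + k))
    {I J : Ideal R} (hI : I.IsPrincipal) (h : I * J = P₁ ^ 2 * P₂ ^ 2 * P₃ ^ 2) :
    I = P₁ * P₂ * P₃ ∨ I ∈ ({⊤, P₁ ^ 2, P₂ ^ 2, P₃ ^ 2} : Set (Ideal R)) ∨
      J ∈ ({⊤, P₁ ^ 2, P₂ ^ 2, P₃ ^ 2} : Set (Ideal R)) := by
  obtain ⟨i, hi, j, hj, k, hk, rfl, rfl⟩ := exists_eq_pow_mul_pow_mul_pow_of_mul_eq hp₁ hp₂ hp₃ h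
  have hpar := (hprin i j k).mp hI
  rw [Nat.even_iff, Nat.even_iff] at hpar
  obtain ⟨rfl, rfl, rfl⟩ | ⟨hi, hj, hk⟩ : (i = 1 ∧ j = 1 ∧ k = 1) ∨
      ((i = 0 ∨ i = 2) ∧ (j = 0 ∨ j = 2) ∧ (k = 0 ∨ k = 2)) := by omega
  · simp
  · rcases hi with rfl | rfl <;> rcases hj with rfl | rfl <;> rcases hk with rfl | rfl <;> simp

end Ideal

namespace AssocIn

variable {K : Type*} [CommRing K] {H : Submonoid K} {x y z x' y' : K}

theorem symm (h : AssocIn H x y) : AssocIn H y x := by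
  obtain ⟨ε, hε, ⟨ε', hε', hεε'⟩, rfl⟩ := h
  exact ⟨ε', hε', ⟨ε, hε, by rw [mul_comm, hεε']⟩, by rw [mul_assoc, hεε', mul_one]⟩

theorem trans (h₁ : AssocIn H x y) (h₂ : AssocIn H y z) : AssocIn H x z := by
  obtain ⟨ε, hε, ⟨ε', hε', hεε'⟩, rfl⟩ := h₁
  obtain ⟨δ, hδ, ⟨δ', hδ', hδδ'⟩, rfl⟩ := h₂
  refine ⟨δ * ε, mul_mem hδ hε, ⟨ε' * δ', mul_mem hε' hδ', ?_⟩, mul_assoc _ _ _⟩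
  rw [mul_assoc, ← mul_assoc ε, hεε', one_mul, hδδ']

theorem mul (h : AssocIn H x y) (h' : AssocIn H x' y') : AssocIn H (x * x') (y * y') := by
  obtain ⟨ε, hε, ⟨ε', hε', hεε'⟩, rfl⟩ := h
  obtain ⟨δ, hδ, ⟨δ', hδ', hδδ'⟩, rfl⟩ := h'
  refine ⟨ε * δ, mul_mem hε hδ, ⟨ε' * δ', mul_mem hε' hδ', ?_⟩, mul_mul_mul_comm _ _ _ _⟩
  rw [mul_mul_mul_comm, hεε', hδδ', one_mul]

theorem of_mul_left [IsDomain K] (hz : z ≠ 0) (h : AssocIn H (z * x) (z * y)) :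
    AssocIn H x y := by
  obtain ⟨ε, hε, hε', hzx⟩ := h
  exact ⟨ε, hε, hε', mul_left_cancel₀ hz (by rw [hzx, mul_assoc])⟩

end AssocIn

namespace IsTKOvermonoid

variable {R : Type*} [CommRing R] [IsDedekindDomain R] {O : Subring R}
  {H : Submonoid (FractionRing R)}

local notation "θ" => algebraMap R (FractionRing R)

theorem algebraMap_mem_of_pow_mem (hH : IsTKOvermonoid O H)
    (hfrac : ∀ r : R, ∃ a b : ↥O, (b : R) ≠ 0 ∧ (b : R) * r = (a : R))
    {x : R} {n : ℕ} (hn : n ≠ 0) (h : θ x ^ n ∈ H) : θ x ∈ H := by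
  obtain ⟨a, b, hb, hab⟩ := hfrac x
  have hx : x ≠ 0 := by rintro rfl; exact hH.nonzero _ h (by simp [hn])
  let A : H := ⟨θ a, hH.incl _ a.2 (hab ▸ mul_ne_zero hb hx)⟩
  let B : H := ⟨θ b, hH.incl _ b.2 hb⟩
  -- `θ x = A / B` with `A, B ∈ H`, and a Krull monoid is root-closed in its quotient group
  obtain ⟨C, hC⟩ := hH.krull.dvd_of_pow_dvd_pow hn (a := A) (b := B)
    ⟨⟨θ x ^ n, h⟩, Subtype.ext (by simp [A, B, ← hab, mul_pow, mul_comm])⟩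
  have hθx : θ x = C := mul_left_cancel₀ (mt IsFractionRing.to_map_eq_zero_iff.mp hb)
    (by rw [← map_mul, hab]; exact congrArg Subtype.val hC)
  exact hθx ▸ C.2

theorem algebraMap_mem_of_regF (hH : IsTKOvermonoid O H)
    (hfrac : ∀ r : R, ∃ a b : ↥O, (b : R) ≠ 0 ∧ (b : R) * r = (a : R))
    (hfin : Finite (R ⧸ O.conductor))
    {x : R} (hx0 : x ≠ 0) (hx : RegF O.conductor x) : θ x ∈ H := by
  obtain ⟨n, hn, hxn⟩ := O.exists_pow_mem_of_regF hfin hx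
  exact hH.algebraMap_mem_of_pow_mem hfrac hn
    (by rw [← map_pow]; exact hH.incl _ hxn (pow_ne_zero n hx0))

theorem assocIn_one_of_isUnit (hH : IsTKOvermonoid O H)
    (hfrac : ∀ r : R, ∃ a b : ↥O, (b : R) ≠ 0 ∧ (b : R) * r = (a : R))
    (hfin : Finite (R ⧸ O.conductor))
    {x : R} (hx : IsUnit x) : AssocIn H (θ x) 1 := by
  obtain ⟨u, rfl⟩ := hx
  have hmem : ∀ v : Rˣ, θ v ∈ H := fun v =>
    hH.algebraMap_mem_of_regF hfrac hfin v.ne_zero (v.isUnit.map _)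
  exact ⟨θ u, hmem u, ⟨θ ↑u⁻¹, hmem u⁻¹, by rw [← map_mul, u.mul_inv, map_one]⟩,
    (one_mul _).symm⟩

theorem assocIn_of_associated (hH : IsTKOvermonoid O H)
    (hfrac : ∀ r : R, ∃ a b : ↥O, (b : R) ≠ 0 ∧ (b : R) * r = (a : R))
    (hfin : Finite (R ⧸ O.conductor))
    {x y : R} (h : Associated x y) : AssocIn H (θ y) (θ x) := by
  obtain ⟨u, rfl⟩ := h
  obtain ⟨ε, hε, hε', hu⟩ := hH.assocIn_one_of_isUnit hfrac hfin u.isUnit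
  exact ⟨ε, hε, hε', by rw [map_mul, hu, one_mul]⟩

theorem isUnit_of_assocIn_one (hH : IsTKOvermonoid O H) (hfin : Finite (R ⧸ O.conductor))
    {x : R} (hx : RegF O.conductor x) (h : AssocIn H (θ x) 1) :
    IsUnit x := by
  obtain ⟨ε, -, ⟨ε', hε', hεε'⟩, hxε⟩ := h
  rw [one_mul] at hxε
  have hx0 : x ≠ 0 := by rintro rfl; simp [← hxε] at hεε'
  obtain ⟨n, hn, hxn⟩ := O.exists_pow_mem_of_regF hfin hx
  obtain ⟨b, -, hb⟩ := hH.t1' _ hxn (pow_ne_zero n hx0)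
    ⟨ε' ^ n, pow_mem hε' n, by rw [map_pow, hxε, ← mul_pow, hεε', one_pow]⟩
  exact (isUnit_pow_iff hn).mp (.of_mul_eq_one b hb)

theorem associated_of_dvd_of_assocIn (hH : IsTKOvermonoid O H) (hfin : Finite (R ⧸ O.conductor))
    {x y : R} (hx0 : x ≠ 0) (hx : RegF O.conductor x)
    (hyx : y ∣ x) (h : AssocIn H (θ x) (θ y)) : Associated x y := by
  obtain ⟨r, rfl⟩ := hyx
  obtain ⟨ε, hε, hε', hθ⟩ := h
  have hr : θ r = ε := mul_left_cancel₀ (mt IsFractionRing.to_map_eq_zero_iff.mp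
    (left_ne_zero_of_mul hx0)) (by rw [← map_mul, hθ])
  exact associated_mul_unit_left _ _ (hH.isUnit_of_assocIn_one hfin
    (hx.of_dvd (dvd_mul_left r y)) ⟨ε, hε, hε', by rw [hr, one_mul]⟩)

theorem assocIn_one_or_assocIn_one_of_irreducible (hH : IsTKOvermonoid O H)
    (hfrac : ∀ r : R, ∃ a b : ↥O, (b : R) ≠ 0 ∧ (b : R) * r = (a : R))
    (hfin : Finite (R ⧸ O.conductor))
    {a : R} (ha : a ∈ O) (hirr : Irreducible a)
    {x y : FractionRing R} (hx : x ∈ H) (hy : y ∈ H) (h : θ a = x * y) :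
    AssocIn H x 1 ∨ AssocIn H y 1 := by
  obtain ⟨v, w, -, -, rfl, hv, hw⟩ := hH.t2 _ ha hirr.ne_zero x hx y hy h
  exact (hirr.isUnit_or_isUnit rfl).imp
    (fun hu => hv.symm.trans (hH.assocIn_one_of_isUnit hfrac hfin hu))
    (fun hu => hw.symm.trans (hH.assocIn_one_of_isUnit hfrac hfin hu))

theorem exists_mem_span_eq_sq (hH : IsTKOvermonoid O H)
    (hfrac : ∀ r : R, ∃ a b : ↥O, (b : R) ≠ 0 ∧ (b : R) * r = (a : R))
    (hfin : Finite (R ⧸ O.conductor)) {P : Ideal R} (hP : P.IsPrime) (hP0 : P ≠ ⊥)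
    (hnp : ¬ P.IsPrincipal) (hsq : (P ^ 2).IsPrincipal) (hPf : IsCoprime P O.conductor) :
    ∃ a ∈ O, Ideal.span {a} = P ^ 2 := by
  have hreg : ∀ {x : R} {n : ℕ}, Ideal.span {x} = P ^ n → RegF O.conductor x :=
    fun h => regF_of_isCoprime (h ▸ hPf.pow_left)
  obtain ⟨γ, hγ⟩ := hsq
  replace hγ : Ideal.span {γ} = P ^ 2 := hγ.symm
  have hγirr := irreducible_of_span_eq_sq hP hP0 hnp hγ
  have hγH := hH.algebraMap_mem_of_regF hfrac hfin hγirr.ne_zero (hreg hγ)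
  obtain ⟨n, hn, hγn⟩ := O.exists_pow_mem_of_regF hfin (hreg hγ)
  obtain ⟨v, w, hvO, -, hvw, hv, -⟩ := hH.t2 _ hγn (pow_ne_zero n hγirr.ne_zero) _ hγH _
    (pow_mem hγH (n - 1)) (by rw [map_pow, ← pow_succ', Nat.sub_add_cancel (Nat.pos_of_ne_zero hn)])
  obtain ⟨i, -, hvi, -⟩ := exists_eq_pow_of_mul_eq_prime_pow (Ideal.prime_of_isPrime hP0 hP)
    (show Ideal.span {v} * Ideal.span {w} = P ^ (2 * n) by
      rw [Ideal.span_singleton_mul_span_singleton, ← hvw, ← Ideal.span_singleton_pow, hγ,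
        pow_mul])
  -- `v ≃ γ` in `H` is not an `H`-unit, and `P` is not principal, so `vR = P ^ i` lies in `γR`
  have hi : 2 ≤ i := by
    by_contra! hi
    interval_cases i
    · have hvu : IsUnit v := by rwa [pow_zero, Ideal.one_eq_top, Ideal.span_singleton_eq_top] at hvi
      exact hγirr.not_isUnit (hH.isUnit_of_assocIn_one hfin (hreg hγ)
        (hv.symm.trans (hH.assocIn_one_of_isUnit hfrac hfin hvu)))
    · exact hnp ⟨⟨v, by rw [← pow_one P, ← hvi]⟩⟩
  have hγv : γ ∣ v := Ideal.span_singleton_le_span_singleton.mp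
    (by rw [hvi, hγ]; exact Ideal.pow_le_pow_right hi)
  refine ⟨v, hvO, ?_⟩
  rw [← hγ, Ideal.span_singleton_eq_span_singleton]
  exact hH.associated_of_dvd_of_assocIn hfin (left_ne_zero_of_mul (hvw ▸ pow_ne_zero n
    hγirr.ne_zero)) (hreg hvi) hγv hv

theorem not_assocIn_of_associated_sq (hH : IsTKOvermonoid O H)
    (hfrac : ∀ r : R, ∃ a b : ↥O, (b : R) ≠ 0 ∧ (b : R) * r = (a : R))
    (hfin : Finite (R ⧸ O.conductor)) {a b c s : R} (ha : a ∈ O) (hai : Irreducible a)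
    (hbi : Irreducible b) (hci : Irreducible c) (hb : RegF O.conductor b)
    (hc : RegF O.conductor c) (hs : Associated (s ^ 2) (a * b * c)) :
    ¬ AssocIn H (θ s) (θ a) := by
  intro h
  have ha0 : θ a ≠ 0 := mt IsFractionRing.to_map_eq_zero_iff.mp hai.ne_zero
  have habc : AssocIn H (θ a * θ (b * c)) (θ a * θ a) := by
    have hs' := hH.assocIn_of_associated hfrac hfin hs
    rw [map_pow, pow_two] at hs'
    simpa only [map_mul, mul_assoc] using hs'.trans (h.mul h)
  obtain ⟨η, hη, hη', hθa⟩ := (habc.of_mul_left ha0).symm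
  -- `θ a = θ b · (θ c · η)` splits the atom `θ a` of `H` into two non-units
  have hcη : AssocIn H (θ c) (θ c * η) := AssocIn.symm ⟨η, hη, hη', rfl⟩
  rcases hH.assocIn_one_or_assocIn_one_of_irreducible hfrac hfin ha hai
      (hH.algebraMap_mem_of_regF hfrac hfin hbi.ne_zero hb)
      (mul_mem (hH.algebraMap_mem_of_regF hfrac hfin hci.ne_zero hc) hη)
      (by rw [hθa, map_mul, mul_assoc]) with h₁ | h₁
  · exact hbi.not_isUnit (hH.isUnit_of_assocIn_one hfin hb h₁)
  · exact hci.not_isUnit (hH.isUnit_of_assocIn_one hfin hc (hcη.trans h₁))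

theorem not_assocIn_of_span_mem (hH : IsTKOvermonoid O H)
    (hfrac : ∀ r : R, ∃ a b : ↥O, (b : R) ≠ 0 ∧ (b : R) * r = (a : R))
    (hfin : Finite (R ⧸ O.conductor)) {a₁ a₂ a₃ s x : R} (ha₁ : a₁ ∈ O) (ha₂ : a₂ ∈ O)
    (ha₃ : a₃ ∈ O) (hi₁ : Irreducible a₁) (hi₂ : Irreducible a₂) (hi₃ : Irreducible a₃)
    (hr₁ : RegF O.conductor a₁) (hr₂ : RegF O.conductor a₂) (hr₃ : RegF O.conductor a₃)
    (hs : Associated (s ^ 2) (a₁ * a₂ * a₃))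
    (hx : Ideal.span {x} ∈ ({⊤, Ideal.span {a₁}, Ideal.span {a₂}, Ideal.span {a₃}} : Set _)) :
    ¬ AssocIn H (θ x) (θ s) := by
  intro h
  have hsa : ∀ {y : R}, Ideal.span {x} = Ideal.span {y} → AssocIn H (θ s) (θ y) := fun hxy =>
    h.symm.trans (hH.assocIn_of_associated hfrac hfin
      (Ideal.span_singleton_eq_span_singleton.mp hxy)).symm
  rcases hx with hx | hx | hx | hx
  · have hsr : RegF O.conductor s :=
      ((hr₁.mul hr₂).mul hr₃).of_dvd ((dvd_pow_self s two_ne_zero).trans hs.dvd)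
    have hsu := hH.isUnit_of_assocIn_one hfin hsr
      (h.symm.trans (hH.assocIn_one_of_isUnit hfrac hfin (Ideal.span_singleton_eq_top.mp hx)))
    exact hi₁.not_isUnit (isUnit_of_mul_isUnit_left (isUnit_of_mul_isUnit_left
      (hs.isUnit_iff.mp (hsu.pow 2))))
  · exact hH.not_assocIn_of_associated_sq hfrac hfin ha₁ hi₁ hi₂ hi₃ hr₂ hr₃ hs (hsa hx)
  · exact hH.not_assocIn_of_associated_sq hfrac hfin ha₂ hi₂ hi₁ hi₃ hr₁ hr₃
      (hs.trans (.of_eq (by ring))) (hsa hx)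
  · exact hH.not_assocIn_of_associated_sq hfrac hfin ha₃ hi₃ hi₁ hi₂ hr₁ hr₂
      (hs.trans (.of_eq (by ring))) (hsa hx)

theorem exists_mul_eq_assocIn_of_associated_sq (hH : IsTKOvermonoid O H)
    (hfrac : ∀ r : R, ∃ a b : ↥O, (b : R) ≠ 0 ∧ (b : R) * r = (a : R))
    (hfin : Finite (R ⧸ O.conductor)) {c t : R} (hc : c ∈ O) (hc0 : c ≠ 0)
    (ht : RegF O.conductor t) (htc : Associated (t ^ 2) c) :
    ∃ v ∈ O, ∃ w ∈ O, ∃ s s' : R, c = v * w ∧ Associated (s ^ 2) c ∧ Associated (s' ^ 2) c ∧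
      AssocIn H (θ v) (θ s) ∧ AssocIn H (θ w) (θ s') := by
  obtain ⟨u, hu⟩ := htc
  have ht0 : t ≠ 0 := by rintro rfl; simp [← hu] at hc0
  -- lift the factorization `θ c = θ (t u) · θ t` of `H` to `O`
  obtain ⟨v, w, hvO, hwO, hvw, hv, hw⟩ := hH.t2 c hc hc0
    _ (hH.algebraMap_mem_of_regF hfrac hfin (mul_ne_zero ht0 u.ne_zero)
      (ht.of_dvd (Units.mul_right_dvd.mpr dvd_rfl)))
    _ (hH.algebraMap_mem_of_regF hfrac hfin ht0 ht) (by rw [← hu, ← map_mul]; ring_nf)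
  exact ⟨v, hvO, w, hwO, t * u, t, hvw,
    (associated_mul_unit_left t u u.isUnit).pow_pow.trans ⟨u, hu⟩, ⟨u, hu⟩, hv, hw⟩

theorem exists_mem_span_eq_mul (hH : IsTKOvermonoid O H)
    (hfrac : ∀ r : R, ∃ a b : ↥O, (b : R) ≠ 0 ∧ (b : R) * r = (a : R))
    (hfin : Finite (R ⧸ O.conductor)) {P₁ P₂ P₃ : Ideal R}
    (hp₁ : P₁.IsPrime) (hp₂ : P₂.IsPrime) (hp₃ : P₃.IsPrime)
    (hb₁ : P₁ ≠ ⊥) (hb₂ : P₂ ≠ ⊥) (hb₃ : P₃ ≠ ⊥) (hf₁ : IsCoprime P₁ O.conductor)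
    (hf₂ : IsCoprime P₂ O.conductor) (hf₃ : IsCoprime P₃ O.conductor)
    (hprin : ∀ i j k : ℕ, (P₁ ^ i * P₂ ^ j * P₃ ^ k).IsPrincipal ↔ Even (i + k) ∧ Even (j + k)) :
    ∃ b ∈ O, Ideal.span {b} = P₁ * P₂ * P₃ := by
  have hgen : ∀ {P : Ideal R}, P.IsPrime → P ≠ ⊥ → IsCoprime P O.conductor →
      ¬ P.IsPrincipal → (P ^ 2).IsPrincipal →
      ∃ a ∈ O, Irreducible a ∧ RegF O.conductor a ∧ Ideal.span {a} = P ^ 2 :=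
    fun hp hb hf hnp hsq =>
      have ⟨a, haO, ha⟩ := hH.exists_mem_span_eq_sq hfrac hfin hp hb hnp hsq hf
      ⟨a, haO, irreducible_of_span_eq_sq hp hb hnp ha, regF_of_isCoprime (ha ▸ hf.pow_left), ha⟩
  obtain ⟨a₁, ha₁O, hi₁, hr₁, ha₁⟩ := hgen hp₁ hb₁ hf₁ (by simpa using hprin 1 0 0)
    (by simpa using hprin 2 0 0)
  obtain ⟨a₂, ha₂O, hi₂, hr₂, ha₂⟩ := hgen hp₂ hb₂ hf₂ (by simpa using hprin 0 1 0)
    (by simpa using hprin 0 2 0)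
  obtain ⟨a₃, ha₃O, hi₃, hr₃, ha₃⟩ := hgen hp₃ hb₃ hf₃ (by simpa using hprin 0 0 1)
    (by simpa using hprin 0 0 2)
  obtain ⟨t, ht⟩ := (hprin 1 1 1).mpr ⟨even_two, even_two⟩
  replace ht : Ideal.span {t} = P₁ * P₂ * P₃ := by simpa using ht.symm
  have htr : RegF O.conductor t := regF_of_isCoprime (ht ▸ (hf₁.mul_left hf₂).mul_left hf₃)
  have htc : Associated (t ^ 2) (a₁ * a₂ * a₃) := by
    rw [← Ideal.span_singleton_eq_span_singleton, ← Ideal.span_singleton_pow,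
      ← Ideal.span_singleton_mul_span_singleton, ← Ideal.span_singleton_mul_span_singleton,
      ht, ha₁, ha₂, ha₃]
    ring
  obtain ⟨v, hvO, w, -, s, s', hvw, hs, hs', hv, hw⟩ := hH.exists_mul_eq_assocIn_of_associated_sq
    hfrac hfin (mul_mem (mul_mem ha₁O ha₂O) ha₃O)
    (mul_ne_zero (mul_ne_zero hi₁.ne_zero hi₂.ne_zero) hi₃.ne_zero) htr htc
  rcases span_eq_mul_or_mem_of_mul_eq (Ideal.prime_of_isPrime hb₁ hp₁)
      (Ideal.prime_of_isPrime hb₂ hp₂) (Ideal.prime_of_isPrime hb₃ hp₃) hprin ⟨⟨v, rfl⟩⟩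
      (by rw [Ideal.span_singleton_mul_span_singleton, ← hvw, ← ha₁, ← ha₂, ← ha₃,
        Ideal.span_singleton_mul_span_singleton, Ideal.span_singleton_mul_span_singleton])
    with h | h | h
  · exact ⟨v, hvO, h⟩
  all_goals rw [← ha₁, ← ha₂, ← ha₃] at h; exfalso
  · exact hH.not_assocIn_of_span_mem hfrac hfin ha₁O ha₂O ha₃O hi₁ hi₂ hi₃ hr₁ hr₂ hr₃ hs h hv
  · exact hH.not_assocIn_of_span_mem hfrac hfin ha₁O ha₂O ha₃O hi₁ hi₂ hi₃ hr₁ hr₂ hr₃ hs' h hw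

end IsTKOvermonoid

theorem order_two_classes_product_in_order_general
    {R : Type*} [CommRing R] [IsDedekindDomain R]
    (O : Subring R)
    (hfrac : ∀ r : R, ∃ a b : ↥O, (b : R) ≠ 0 ∧ (b : R) * r = (a : R))
    (hfin : Finite (R ⧸ O.conductor))
    (H : Submonoid (FractionRing R)) (hH : IsTKOvermonoid O H)
    (P₁ P₂ P₃ : Ideal R)
    (h₁ : P₁ ∈ (Ideal R)⁰) (h₂ : P₂ ∈ (Ideal R)⁰) (h₃ : P₃ ∈ (Ideal R)⁰)
    (hp₁ : P₁.IsPrime) (hp₂ : P₂.IsPrime) (hp₃ : P₃.IsPrime)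
    (hc₁ : ¬ O.conductor ≤ P₁) (hc₂ : ¬ O.conductor ≤ P₂) (hc₃ : ¬ O.conductor ≤ P₃)
    (ho₁ : orderOf (ClassGroup.mk0 ⟨P₁, h₁⟩) = 2)
    (ho₂ : orderOf (ClassGroup.mk0 ⟨P₂, h₂⟩) = 2)
    (hneq : ClassGroup.mk0 ⟨P₁, h₁⟩ ≠ ClassGroup.mk0 ⟨P₂, h₂⟩)
    (hcl : ClassGroup.mk0 ⟨P₃, h₃⟩ = ClassGroup.mk0 ⟨P₁, h₁⟩ * ClassGroup.mk0 ⟨P₂, h₂⟩) :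
    ∃ b ∈ O, Ideal.span {b} = P₁ * P₂ * P₃ := by
  have hb₁ := nonZeroDivisors.ne_zero h₁
  have hb₂ := nonZeroDivisors.ne_zero h₂
  have hb₃ := nonZeroDivisors.ne_zero h₃
  exact hH.exists_mem_span_eq_mul hfrac hfin hp₁ hp₂ hp₃ hb₁ hb₂ hb₃
    (hp₁.isCoprime_of_not_le hb₁ hc₁) (hp₂.isCoprime_of_not_le hb₂ hc₂)
    (hp₃.isCoprime_of_not_le hb₃ hc₃)
    (isPrincipal_pow_mul_pow_mul_pow_iff h₁ h₂ h₃ ho₁ ho₂ hneq hcl)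

theorem order_two_classes_product_in_order
    {R : Type*} [CommRing R] [IsDomain R] [IsDedekindDomain R]
    (O : Subring R) (hne : O ≠ ⊤) (hfg : Module.Finite ↥O R)
    (hfrac : ∀ r : R, ∃ a b : ↥O, (b : R) ≠ 0 ∧ (b : R) * r = (a : R))
    (htor : ∀ c : ClassGroup R, ∃ n : ℕ, 0 < n ∧ c ^ n = 1)
    (hfin : Finite (R ⧸ O.conductor))
    (hcls : ∀ c : ClassGroup R, ∃ (P : Ideal R) (hP : P ∈ (Ideal R)⁰),
      P.IsPrime ∧ ¬ O.conductor ≤ P ∧ ClassGroup.mk0 ⟨P, hP⟩ = c)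
    (H : Submonoid (FractionRing R)) (hH : IsTKOvermonoid O H)
    (hcard : Nat.card (ClassGroup R) ≠ 2)
    (P₁ P₂ P₃ : Ideal R)
    (h₁ : P₁ ∈ (Ideal R)⁰) (h₂ : P₂ ∈ (Ideal R)⁰) (h₃ : P₃ ∈ (Ideal R)⁰)
    (hp₁ : P₁.IsPrime) (hp₂ : P₂.IsPrime) (hp₃ : P₃.IsPrime)
    (hc₁ : ¬ O.conductor ≤ P₁) (hc₂ : ¬ O.conductor ≤ P₂) (hc₃ : ¬ O.conductor ≤ P₃)
    (ho₁ : orderOf (ClassGroup.mk0 ⟨P₁, h₁⟩) = 2)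
    (ho₂ : orderOf (ClassGroup.mk0 ⟨P₂, h₂⟩) = 2)
    (hneq : ClassGroup.mk0 ⟨P₁, h₁⟩ ≠ ClassGroup.mk0 ⟨P₂, h₂⟩)
    (hcl : ClassGroup.mk0 ⟨P₃, h₃⟩ = ClassGroup.mk0 ⟨P₁, h₁⟩ * ClassGroup.mk0 ⟨P₂, h₂⟩) :
    ∃ b ∈ O, Ideal.span {b} = P₁ * P₂ * P₃ :=
  order_two_classes_product_in_order_general O hfrac hfin H hH P₁ P₂ P₃ h₁ h₂ h₃ hp₁ hp₂ hp₃ hc₁ hc₂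
    hc₃ ho₁ ho₂ hneq hcl
end
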